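/- Let f = {f_t}_{t≥1} be an anonymous acknowledgment-based protocol for n players, let π = π₁, π₂, … be a 0-1 sequence consistent with f, and for a finite positive integer τ* define the protocol g by g_t = π_t for 1 ≤ t ≤ τ* and g_t = f_t for t > τ*. If f is in equilibrium, then for every player i the unconditional expected latencies coincide: C_i^{f}(h₀) = C_i^{(f_{-i}, g)}(h₀). -/

import Mathlib

open scoped ENNReal

namespace Contention

/-- An acknowledgment-based protocol: maps a player's personal transmission history
(the list of her own past transmission indicators, oldest slot first) to the
probability of transmitting in the next slot. -/
abbrev Protocol : Type := List Bool → ℝ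

/-- A protocol is valid if it always prescribes a probability in `[0,1]`. -/
def ValidProtocol (f : Protocol) : Prop := ∀ h : List Bool, 0 ≤ f h ∧ f h ≤ 1

/-- A joint transmission history: the list of transmission vectors, oldest slot first. -/
abbrev Hist (n : ℕ) : Type := List (Fin n → Bool)

/-- The personal transmission history of player `i` extracted from a joint history. -/
def personal {n : ℕ} (h : Hist n) (i : Fin n) : List Bool := h.map fun v => v i

/-- Player `i` transmits alone (hence successfully) in the slot with transmission vector `v`. -/
def alone {n : ℕ} (v : Fin n → Bool) (i : Fin n) : Prop :=
  v i = true ∧ ∀ j : Fin n, j ≠ i → v j = false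

instance {n : ℕ} (v : Fin n → Bool) (i : Fin n) : Decidable (alone v i) := by
  unfold alone; infer_instance

/-- Player `i` is still pending after joint history `h` (she never transmitted alone). -/
def pending {n : ℕ} (h : Hist n) (i : Fin n) : Prop := ∀ v ∈ h, ¬ alone v i

instance {n : ℕ} (h : Hist n) (i : Fin n) : Decidable (pending h i) := by
  unfold pending; infer_instance

/-- Probability that the next slot has transmission vector `v`, given joint history `h`:
each pending player transmits independently with the probability her protocol assigns to
her personal history, and players that already succeeded stay quiet. -/
noncomputable def stepProb {n : ℕ} (F : Fin n → Protocol) (h : Hist n) (v : Fin n → Bool) : ℝ :=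
  ∏ i : Fin n,
    if pending h i then
      (if v i = true then F i (personal h i) else 1 - F i (personal h i))
    else
      (if v i = true then 0 else 1)

/-- Probability that, starting after joint history `h`, the next `e.length` slots produce
exactly the extension `e`. -/
noncomputable def contProb {n : ℕ} (F : Fin n → Protocol) (h e : Hist n) : ℝ :=
  ∏ t ∈ Finset.range e.length, stepProb F (h ++ e.take t) (e.getD t fun _ => false)

/-- Probability that the first `h.length` slots produce exactly the joint history `h`. -/
noncomputable def histProb {n : ℕ} (F : Fin n → Protocol) (h : Hist n) : ℝ := contProb F [] h

/-- Conditional probability, given joint history `h`, that player `i` is still pending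
after `s` further slots. -/
noncomputable def condPendProb {n : ℕ} (F : Fin n → Protocol) (h : Hist n) (i : Fin n)
    (s : ℕ) : ℝ :=
  ∑ e : Fin s → Fin n → Bool,
    if pending (h ++ List.ofFn e) i then contProb F h (List.ofFn e) else 0

/-- Conditional expected latency `E[Tᵢ | h]` of player `i` given joint history `h`
(`Tᵢ` is the first slot in which `i` transmits alone), computed via
`E[Tᵢ | h] = ∑_{s ≥ 0} Pr(Tᵢ > s | h)`; for `s ≤ h.length` the event `Tᵢ > s` is
determined by `h`, and for larger `s` its probability is `condPendProb`. -/
noncomputable def condLatency {n : ℕ} (F : Fin n → Protocol) (h : Hist n) (i : Fin n) : ℝ≥0∞ :=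
  ∑' s : ℕ,
    if s ≤ h.length then (if pending (h.take s) i then 1 else 0)
    else ENNReal.ofReal (condPendProb F h i (s - h.length))

/-- Conditional expected number of further slots until player `i` succeeds, given joint
history `h` (the slot of the successful transmission itself is counted). -/
noncomputable def condRemaining {n : ℕ} (F : Fin n → Protocol) (h : Hist n) (i : Fin n) : ℝ≥0∞ :=
  ∑' s : ℕ, ENNReal.ofReal (condPendProb F h i s)

/-- A profile of protocols is in equilibrium if after no joint history (arising with
positive probability) can a player strictly decrease her conditional expected latency
by unilaterally switching to another (valid) protocol. -/
def IsEquilibrium {n : ℕ} (F : Fin n → Protocol) : Prop :=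
  ∀ i : Fin n, ∀ h : Hist n, 0 < histProb F h →
    ∀ g : Protocol, ValidProtocol g →
      condLatency F h i ≤ condLatency (Function.update F i g) h i

end Contention

namespace Contention

/-- A personal history `h` is consistent with protocol `f` if a player following `f`
produces it with positive probability. -/
def SelfConsistent (f : Protocol) (h : List Bool) : Prop :=
  0 < ∏ t ∈ Finset.range h.length,
        (if h.getD t false = true then f (h.take t) else 1 - f (h.take t))

/-- The protocol `g = g(τ)` of Lemma 1: follow the deterministic 0-1 sequence `π`
(`π s` is the action of slot `s+1`) for the first `τ` slots, and follow `f` afterwards. -/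
noncomputable def switchProtocol (f : Protocol) (π : ℕ → Bool) (τ : ℕ) : Protocol := fun h =>
  if h.length < τ then (if π h.length then 1 else 0) else f h

end Contention

/-!
Backward induction over the slots before `τ`. As long as player `i` is pending under the
deviation, her own history is a prefix of `π`, which `f` produces with positive probability;
hence every history the deviation reaches with positive probability is also reached under `f`,
and the equilibrium condition applies there. At such a history, following `f` for one slot is
the mixture, with weights `f` and `1 - f`, of committing to transmit or to stay quiet in that
slot and following `f` afterwards. Equilibrium says that neither commitment beats the mixture,
so the commitment to `π`'s action, which has positive weight, does exactly as well. From slot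
`τ` on, and once `i` has succeeded, the deviation and `f` induce the same dynamics.
-/

theorem ENNReal.eq_of_convex_comb_le {a b x y t : ℝ≥0∞} (hab : a + b = 1) (ha : a ≠ 0)
    (ht : t = a * x + b * y) (hx : t ≤ x) (hy : t ≤ y) : x = t := by
  refine (eq_of_le_of_not_lt hx fun hlt => ?_).symm
  have ha_top : a ≠ ⊤ := ne_top_of_le_ne_top one_ne_top (hab ▸ le_self_add)
  have hbt_top : b * t ≠ ⊤ := mul_ne_top (ne_top_of_le_ne_top one_ne_top (hab ▸ le_add_self))
    hlt.ne_top
  have : t < t :=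
    calc t = a * t + b * t := by rw [← add_mul, hab, one_mul]
      _ < a * x + b * y := ENNReal.add_lt_add_of_lt_of_le hbt_top
          (ENNReal.mul_lt_mul_right ha ha_top hlt) (by gcongr)
      _ = t := ht.symm
  exact this.false

theorem ENNReal.ofReal_add_ofReal_one_sub {c : ℝ} (h₀ : 0 ≤ c) (h₁ : c ≤ 1) :
    ENNReal.ofReal c + ENNReal.ofReal (1 - c) = 1 := by
  rw [← ENNReal.ofReal_add h₀ (by linarith), add_sub_cancel, ENNReal.ofReal_one]

namespace Contention

open Function

theorem SelfConsistent.last_pos {f : Protocol} (hf : ValidProtocol f) {l : List Bool} {b : Bool}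
    (hc : SelfConsistent f (l ++ [b])) : 0 < if b then f l else 1 - f l := by
  unfold SelfConsistent at hc
  rw [List.length_append, List.length_singleton, Finset.prod_range_succ,
    List.take_left' rfl, List.getD_append_right _ _ _ _ le_rfl, Nat.sub_self] at hc
  refine pos_of_mul_pos_right hc (Finset.prod_nonneg fun t _ => ?_)
  have := hf ((l ++ [b]).take t)
  split <;> linarith

/-- Play `b` in slot `k + 1` and follow `f` in every other slot. -/
noncomputable def commitAt (f : Protocol) (k : ℕ) (b : Bool) : Protocol := fun p =>
  if p.length = k then (if b then 1 else 0) else f p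

theorem ValidProtocol.commitAt {f : Protocol} (hf : ValidProtocol f) (k : ℕ) (b : Bool) :
    ValidProtocol (commitAt f k b) := by
  intro p
  unfold Contention.commitAt
  split_ifs <;> simp [hf p]

theorem ValidProtocol.switchProtocol {f : Protocol} (hf : ValidProtocol f) (π : ℕ → Bool)
    (τ : ℕ) : ValidProtocol (switchProtocol f π τ) := by
  intro p
  unfold Contention.switchProtocol
  split_ifs <;> simp [hf p]

variable {n : ℕ}

theorem validProtocol_update {F : Fin n → Protocol} (hF : ∀ j, ValidProtocol (F j)) (i : Fin n)
    {g : Protocol} (hg : ValidProtocol g) (j : Fin n) : ValidProtocol (update F i g j) := by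
  rcases eq_or_ne j i with rfl | hji
  · rwa [update_self]
  · rw [update_of_ne hji]; exact hF j

theorem length_personal (h : Hist n) (i : Fin n) : (personal h i).length = h.length := by
  simp [personal]

theorem personal_append_singleton (h : Hist n) (v : Fin n → Bool) (i : Fin n) :
    personal (h ++ [v]) i = personal h i ++ [v i] := by
  simp [personal]

theorem pending.of_append {h e : Hist n} {i : Fin n} (hp : pending (h ++ e) i) :
    pending h i := fun v hv => hp v (List.mem_append_left _ hv)

noncomputable def playerProb (F : Fin n → Protocol) (h : Hist n) (v : Fin n → Bool)
    (j : Fin n) : ℝ :=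
  if pending h j then
    (if v j = true then F j (personal h j) else 1 - F j (personal h j))
  else
    (if v j = true then 0 else 1)

section Dynamics

variable {F F' : Fin n → Protocol} {h : Hist n} {i : Fin n}

theorem stepProb_eq_prod_playerProb (F : Fin n → Protocol) (h : Hist n) (v : Fin n → Bool) :
    stepProb F h v = ∏ j, playerProb F h v j := rfl

theorem playerProb_nonneg (hF : ∀ j, ValidProtocol (F j)) (h : Hist n) (v : Fin n → Bool)
    (j : Fin n) : 0 ≤ playerProb F h v j := by
  have := hF j (personal h j)
  unfold playerProb
  split_ifs <;> linarith

theorem playerProb_update_of_ne {j : Fin n} (hji : j ≠ i) (g : Protocol) (v : Fin n → Bool) :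
    playerProb (update F i g) h v j = playerProb F h v j := by
  simp only [playerProb, update_of_ne hji]

theorem playerProb_update_self (hp : pending h i) (g : Protocol) (v : Fin n → Bool) :
    playerProb (update F i g) h v i
      = if v i = true then g (personal h i) else 1 - g (personal h i) := by
  simp only [playerProb, if_pos hp, update_self]

theorem stepProb_nonneg (hF : ∀ j, ValidProtocol (F j)) (h : Hist n) (v : Fin n → Bool) :
    0 ≤ stepProb F h v :=
  Finset.prod_nonneg fun j _ => playerProb_nonneg hF h v j

theorem contProb_nonneg (hF : ∀ j, ValidProtocol (F j)) (h e : Hist n) : 0 ≤ contProb F h e :=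
  Finset.prod_nonneg fun _ _ => stepProb_nonneg hF _ _

theorem condPendProb_nonneg (hF : ∀ j, ValidProtocol (F j)) (h : Hist n) (i : Fin n) (s : ℕ) :
    0 ≤ condPendProb F h i s :=
  Finset.sum_nonneg fun _ _ => by split <;> simp [contProb_nonneg hF]

theorem stepProb_congr (hFF : ∀ j, pending h j → F j (personal h j) = F' j (personal h j))
    (v : Fin n → Bool) : stepProb F h v = stepProb F' h v :=
  Finset.prod_congr rfl fun j _ => by
    by_cases hp : pending h j
    · simp only [hp, if_pos, hFF j hp]
    · simp only [hp, if_neg, not_false_eq_true]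

theorem contProb_nil (F : Fin n → Protocol) (h : Hist n) : contProb F h [] = 1 := rfl

theorem contProb_cons (F : Fin n → Protocol) (h : Hist n) (v : Fin n → Bool) (e : Hist n) :
    contProb F h (v :: e) = stepProb F h v * contProb F (h ++ [v]) e := by
  unfold contProb
  rw [List.length_cons, Finset.prod_range_succ', mul_comm]
  congr 1
  · simp
  · exact Finset.prod_congr rfl fun t _ => by simp

theorem contProb_append_singleton (F : Fin n → Protocol) (h e : Hist n) (v : Fin n → Bool) :
    contProb F h (e ++ [v]) = contProb F h e * stepProb F (h ++ e) v := by
  induction e generalizing h with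
  | nil => simp [contProb_cons, contProb_nil]
  | cons w e ih => simp [contProb_cons, ih, mul_assoc]

theorem histProb_append_singleton (F : Fin n → Protocol) (h : Hist n) (v : Fin n → Bool) :
    histProb F (h ++ [v]) = histProb F h * stepProb F h v :=
  contProb_append_singleton F [] h v

theorem condPendProb_zero (F : Fin n → Protocol) (h : Hist n) (i : Fin n) :
    condPendProb F h i 0 = if pending h i then 1 else 0 := by
  simp [condPendProb, contProb_nil]

theorem condPendProb_succ (F : Fin n → Protocol) (h : Hist n) (i : Fin n) (s : ℕ) :
    condPendProb F h i (s + 1)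
      = ∑ v : Fin n → Bool, stepProb F h v * condPendProb F (h ++ [v]) i s := by
  unfold condPendProb
  rw [← (Fin.consEquiv fun _ : Fin (s + 1) => Fin n → Bool).sum_comp, Fintype.sum_prod_type]
  refine Finset.sum_congr rfl fun v _ => ?_
  rw [Finset.mul_sum]
  refine Finset.sum_congr rfl fun e _ => ?_
  have happ : h ++ v :: List.ofFn e = (h ++ [v]) ++ List.ofFn e := by simp
  simp only [Fin.consEquiv_apply, List.ofFn_succ, Fin.cons_zero, Fin.cons_succ, contProb_cons,
    happ, mul_ite, mul_zero]

theorem condRemaining_eq_add_sum (hF : ∀ j, ValidProtocol (F j)) (h : Hist n) (i : Fin n) :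
    condRemaining F h i = (if pending h i then 1 else 0)
      + ∑ v, ENNReal.ofReal (stepProb F h v) * condRemaining F (h ++ [v]) i := by
  unfold condRemaining
  rw [tsum_eq_zero_add' ENNReal.summable, condPendProb_zero]
  congr 1
  · split <;> simp
  · have hterm : ∀ s, ENNReal.ofReal (condPendProb F h i (s + 1)) = ∑ v,
        ENNReal.ofReal (stepProb F h v) * ENNReal.ofReal (condPendProb F (h ++ [v]) i s) := by
      intro s
      rw [condPendProb_succ, ENNReal.ofReal_sum_of_nonneg fun v _ =>
        mul_nonneg (stepProb_nonneg hF h v) (condPendProb_nonneg hF _ i _)]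
      exact Finset.sum_congr rfl fun v _ => ENNReal.ofReal_mul (stepProb_nonneg hF h v)
    simp only [hterm, ← ENNReal.tsum_mul_left]
    exact Summable.tsum_finsetSum fun _ _ => ENNReal.summable

theorem condRemaining_congr
    (hFF : ∀ (e : Hist n) (v : Fin n → Bool), stepProb F (h ++ e) v = stepProb F' (h ++ e) v)
    (i : Fin n) : condRemaining F h i = condRemaining F' h i :=
  tsum_congr fun _ => by
    simp only [condPendProb, contProb, hFF]

theorem condRemaining_eq_of_stepProb_eq (hF : ∀ j, ValidProtocol (F j))
    (hF' : ∀ j, ValidProtocol (F' j)) (hstep : ∀ v, stepProb F h v = stepProb F' h v)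
    (hnext : ∀ v, stepProb F h v ≠ 0 →
      condRemaining F (h ++ [v]) i = condRemaining F' (h ++ [v]) i) :
    condRemaining F h i = condRemaining F' h i := by
  rw [condRemaining_eq_add_sum hF, condRemaining_eq_add_sum hF']
  refine congrArg _ (Finset.sum_congr rfl fun v _ => ?_)
  rcases eq_or_ne (stepProb F h v) 0 with hz | hz
  · simp [← hstep, hz]
  · rw [hstep, hnext v hz]

theorem condRemaining_update_of_not_pending (hp : ¬ pending h i) (g : Protocol) :
    condRemaining (update F i g) h i = condRemaining F h i :=
  condRemaining_congr (fun e v => stepProb_congr (fun j hj => by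
    rw [update_of_ne]
    rintro rfl
    exact hp hj.of_append) v) i

theorem condRemaining_update_of_forall_length_le {g : Protocol}
    (hg : ∀ p : List Bool, h.length ≤ p.length → g p = F i p) :
    condRemaining (update F i g) h i = condRemaining F h i :=
  condRemaining_congr (fun e v => stepProb_congr (fun j _ => by
    rcases eq_or_ne j i with rfl | hji
    · rw [update_self, hg]
      simp [length_personal]
    · rw [update_of_ne hji]) v) i

theorem condLatency_eq_add_condRemaining (F : Fin n → Protocol) (h : Hist n) (i : Fin n) :
    condLatency F h i
      = (∑ s ∈ Finset.range h.length, if pending (h.take s) i then 1 else 0)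
        + condRemaining F h i := by
  rw [condLatency, ← ENNReal.summable.sum_add_tsum_nat_add' (k := h.length)]
  congr 1
  · exact Finset.sum_congr rfl fun s hs => if_pos (Finset.mem_range.1 hs).le
  · refine tsum_congr fun s => ?_
    rcases s with _ | s
    · rw [Nat.zero_add, if_pos le_rfl, List.take_length, condPendProb_zero]
      split <;> simp
    · rw [if_neg (by omega)]
      congr 2
      omega

theorem condLatency_nil (F : Fin n → Protocol) (i : Fin n) :
    condLatency F [] i = condRemaining F [] i := by
  simp [condLatency_eq_add_condRemaining]

theorem IsEquilibrium.condRemaining_le (heq : IsEquilibrium F) (hpos : 0 < histProb F h)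
    {g : Protocol} (hg : ValidProtocol g) :
    condRemaining F h i ≤ condRemaining (update F i g) h i := by
  have := heq i h hpos g hg
  rwa [condLatency_eq_add_condRemaining, condLatency_eq_add_condRemaining,
    ENNReal.add_le_add_iff_left (ENNReal.sum_ne_top.2 fun s _ => by split <;> simp)] at this

end Dynamics

section Deviation

variable {F : Fin n → Protocol} {h : Hist n} {i : Fin n}

theorem commitAt_apply_of_length_eq {f : Protocol} {k : ℕ} {p : List Bool} (hp : p.length = k)
    (b : Bool) : commitAt f k b p = if b then 1 else 0 :=
  if_pos hp

theorem condRemaining_update_commitAt_append (b : Bool) (v : Fin n → Bool) :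
    condRemaining (update F i (commitAt (F i) h.length b)) (h ++ [v]) i
      = condRemaining F (h ++ [v]) i :=
  condRemaining_update_of_forall_length_le fun _ hlen => if_neg (by simp at hlen; omega)

theorem stepProb_eq_mix (hp : pending h i) {q₁ q₀ : Protocol} (h₁ : q₁ (personal h i) = 1)
    (h₀ : q₀ (personal h i) = 0) (v : Fin n → Bool) :
    stepProb F h v = F i (personal h i) * stepProb (update F i q₁) h v
      + (1 - F i (personal h i)) * stepProb (update F i q₀) h v := by
  simp only [stepProb_eq_prod_playerProb, ← Finset.mul_prod_erase _ _ (Finset.mem_univ i)]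
  rw [Finset.prod_congr rfl fun j hj => playerProb_update_of_ne (Finset.ne_of_mem_erase hj) q₁ v,
    Finset.prod_congr rfl fun j hj => playerProb_update_of_ne (Finset.ne_of_mem_erase hj) q₀ v,
    playerProb_update_self hp, playerProb_update_self hp, h₁, h₀, playerProb, if_pos hp]
  cases v i <;> simp only [Bool.false_eq_true, if_true, if_false] <;> ring

theorem condRemaining_eq_mix (hF : ∀ j, ValidProtocol (F j)) (hp : pending h i) :
    condRemaining F h i
      = ENNReal.ofReal (F i (personal h i))
          * condRemaining (update F i (commitAt (F i) h.length true)) h i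
        + ENNReal.ofReal (1 - F i (personal h i))
          * condRemaining (update F i (commitAt (F i) h.length false)) h i := by
  have hc := hF i (personal h i)
  have hvalid (b : Bool) := validProtocol_update hF i ((hF i).commitAt h.length b)
  have hstep (v : Fin n → Bool) : ENNReal.ofReal (stepProb F h v)
      = ENNReal.ofReal (F i (personal h i))
          * ENNReal.ofReal (stepProb (update F i (commitAt (F i) h.length true)) h v)
        + ENNReal.ofReal (1 - F i (personal h i))
          * ENNReal.ofReal (stepProb (update F i (commitAt (F i) h.length false)) h v) := by
    rw [stepProb_eq_mix hp (commitAt_apply_of_length_eq (length_personal h i) true)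
      (commitAt_apply_of_length_eq (length_personal h i) false), ENNReal.ofReal_add
      (mul_nonneg hc.1 (stepProb_nonneg (hvalid true) h v))
      (mul_nonneg (by linarith) (stepProb_nonneg (hvalid false) h v)),
      ENNReal.ofReal_mul hc.1, ENNReal.ofReal_mul (by linarith)]
  rw [condRemaining_eq_add_sum hF, condRemaining_eq_add_sum (hvalid true),
    condRemaining_eq_add_sum (hvalid false), if_pos hp]
  simp only [condRemaining_update_commitAt_append, hstep, add_mul, Finset.sum_add_distrib,
    mul_add, mul_one, Finset.mul_sum, mul_assoc]
  rw [add_add_add_comm, ENNReal.ofReal_add_ofReal_one_sub hc.1 hc.2]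

theorem IsEquilibrium.condRemaining_commitAt (heq : IsEquilibrium F)
    (hF : ∀ j, ValidProtocol (F j)) (hpos : 0 < histProb F h) (hp : pending h i) {b : Bool}
    (hb : 0 < if b then F i (personal h i) else 1 - F i (personal h i)) :
    condRemaining (update F i (commitAt (F i) h.length b)) h i = condRemaining F h i := by
  have hc := hF i (personal h i)
  have hmix := condRemaining_eq_mix hF hp
  have hle (b : Bool) := heq.condRemaining_le (i := i) hpos ((hF i).commitAt h.length b)
  have hsum := ENNReal.ofReal_add_ofReal_one_sub hc.1 hc.2
  cases b <;> simp only [Bool.false_eq_true, if_true, if_false] at hb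
  · exact ENNReal.eq_of_convex_comb_le (by rwa [add_comm]) (ENNReal.ofReal_pos.2 hb).ne'
      (by rw [hmix, add_comm]) (hle false) (hle true)
  · exact ENNReal.eq_of_convex_comb_le hsum (ENNReal.ofReal_pos.2 hb).ne' hmix
      (hle true) (hle false)

theorem eq_of_stepProb_commitAt_ne_zero (hp : pending h i) {b : Bool} {v : Fin n → Bool}
    (hv : stepProb (update F i (commitAt (F i) h.length b)) h v ≠ 0) : v i = b := by
  rw [stepProb_eq_prod_playerProb] at hv
  have := Finset.prod_ne_zero_iff.1 hv i (Finset.mem_univ i)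
  rw [playerProb_update_self hp, commitAt_apply_of_length_eq (length_personal h i)] at this
  revert this
  cases b <;> cases v i <;> simp

theorem stepProb_pos_of_commitAt (hF : ∀ j, ValidProtocol (F j)) (hp : pending h i) {b : Bool}
    (hb : 0 < if b then F i (personal h i) else 1 - F i (personal h i)) {v : Fin n → Bool}
    (hv : 0 < stepProb (update F i (commitAt (F i) h.length b)) h v) : 0 < stepProb F h v := by
  have hnonneg (b : Bool) := stepProb_nonneg
    (validProtocol_update hF i ((hF i).commitAt h.length b)) h v
  rw [stepProb_eq_mix hp (commitAt_apply_of_length_eq (length_personal h i) true)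
    (commitAt_apply_of_length_eq (length_personal h i) false)]
  have hc := hF i (personal h i)
  cases b
  · exact add_pos_of_nonneg_of_pos (mul_nonneg hc.1 (hnonneg true)) (mul_pos hb hv)
  · exact add_pos_of_pos_of_nonneg (mul_pos hb hv) (mul_nonneg (by linarith) (hnonneg false))

end Deviation

theorem ofFn_seq_succ (π : ℕ → Bool) (t : ℕ) :
    (List.ofFn fun s : Fin (t + 1) => π s.val)
      = (List.ofFn fun s : Fin t => π s.val) ++ [π t] := by
  rw [List.ofFn_succ', List.concat_eq_append]
  rfl

theorem stepProb_switchProtocol_of_lt {F : Fin n → Protocol} {i : Fin n} {π : ℕ → Bool}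
    {τ : ℕ} {h : Hist n} (hτ : h.length < τ) (v : Fin n → Bool) :
    stepProb (update F i (switchProtocol (F i) π τ)) h v
      = stepProb (update F i (commitAt (F i) h.length (π h.length))) h v :=
  stepProb_congr (fun j _ => by
    rcases eq_or_ne j i with rfl | hji
    · simp only [update_self, switchProtocol, commitAt, length_personal, if_pos hτ, ↓reduceIte]
    · simp only [update_of_ne hji]) v

theorem condRemaining_switchProtocol {F : Fin n → Protocol} (hF : ∀ j, ValidProtocol (F j))
    (heq : IsEquilibrium F) {i : Fin n} {π : ℕ → Bool}
    (hπ : ∀ t, SelfConsistent (F i) (List.ofFn fun s : Fin t => π s.val)) {τ : ℕ}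
    (h : Hist n) (hpos : 0 < histProb F h)
    (hper : pending h i → personal h i = List.ofFn fun s : Fin h.length => π s.val) :
    condRemaining (update F i (switchProtocol (F i) π τ)) h i = condRemaining F h i := by
  induction hd : τ - h.length generalizing h with
  | zero => exact condRemaining_update_of_forall_length_le fun p hp => if_neg (by omega)
  | succ d ih =>
    by_cases hp : pending h i
    swap
    · exact condRemaining_update_of_not_pending hp _
    set b := π h.length
    have hvalid := validProtocol_update hF i ((hF i).commitAt h.length b)
    have hb : 0 < if b then F i (personal h i) else 1 - F i (personal h i) := by
      have := hπ (h.length + 1)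
      rw [ofFn_seq_succ, ← hper hp] at this
      exact this.last_pos (hF i)
    calc _ = condRemaining (update F i (commitAt (F i) h.length b)) h i := by
          refine condRemaining_eq_of_stepProb_eq
            (validProtocol_update hF i ((hF i).switchProtocol π τ)) hvalid
            (stepProb_switchProtocol_of_lt (by omega)) fun v hz => ?_
          rw [stepProb_switchProtocol_of_lt (by omega)] at hz
          have hvi := eq_of_stepProb_commitAt_ne_zero hp hz
          have hFv := stepProb_pos_of_commitAt hF hp hb
            ((stepProb_nonneg hvalid h v).lt_of_ne' hz)
          rw [condRemaining_update_commitAt_append]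
          refine ih (h ++ [v]) (by rw [histProb_append_singleton]; exact mul_pos hpos hFv)
            (fun _ => ?_) (by simp; omega)
          rw [personal_append_singleton, hper hp, hvi, List.length_append,
            List.length_singleton, ofFn_seq_succ]
      _ = condRemaining F h i := heq.condRemaining_commitAt hF hpos hp hb

/-- Let `f` be an anonymous acknowledgment-based protocol for `n` players,
`π` a 0-1 sequence consistent with `f`, and for a finite positive integer `τ` let `g`
play `π` up to slot `τ` and `f` afterwards.  If `f` is in equilibrium then for every
player `i` the unconditional expected latencies under `f` and under the unilateral
deviation to `g` coincide. -/
theorem consistent_deviations_are_best_responses :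
    ∀ (n : ℕ) (f : Protocol) (π : ℕ → Bool) (τ : ℕ),
      1 ≤ τ →
      ValidProtocol f →
      (∀ t : ℕ, SelfConsistent f (List.ofFn fun s : Fin t => π s.val)) →
      IsEquilibrium (fun _ : Fin n => f) →
      ∀ i : Fin n,
        condLatency (fun _ : Fin n => f) [] i
          = condLatency (Function.update (fun _ : Fin n => f) i (switchProtocol f π τ)) [] i := by
  intro n f π τ _ hf hπ heq i
  rw [condLatency_nil, condLatency_nil]
  exact (condRemaining_switchProtocol (fun _ => hf) heq hπ []
    (by simp [histProb, contProb_nil]) fun _ => rfl).symm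

end Contention
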